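/- Let θ_v^{f,2}(r) := arccos((r_v cos Θ_u − r_u cos Θ_v)/√(r_v² + r_u² + 2 r_v r_u cos Θ_w)) for r_v, r_u > 0 and Θ_v, Θ_u, Θ_w ∈ [0,π/2] with Θ_w the weight of the edge joining v and u. Then ∂(θ_v^{f,2}∘R)/∂x_u = ∂(θ_u^{f,2}∘R)/∂x_v = −∂(θ_v^{f,2}∘R)/∂x_v ≥ 0, where R(x)_w = e^{x_w}, with equality iff Θ_v = Θ_u = π/2. -/

import Mathlib

/-!
The angle is invariant under `(r_v, r_u) ↦ (t r_v, t r_u)` for `t > 0`, so in logarithmic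
coordinates it depends only on `x_u - x_v`, whence `∂_{x_v} θ_v = -∂_{x_u} θ_v`. Exchanging `v` and
`u` negates the argument of `arccos`, so `θ_u = π - θ_v` and `∂_{x_v} θ_u = ∂_{x_u} θ_v`. The chain
rule gives `∂_{x_u} θ_v = κ (r_v (cos Θ_v + cos Θ_u cos Θ_w) + r_u (cos Θ_u + cos Θ_v cos Θ_w))`
with `κ > 0`, and for weights in `[0, π/2]` the bracket is nonnegative and vanishes exactly when
`cos Θ_v = cos Θ_u = 0`.
-/
open Real

/-- The degenerate angle at the vertex `v` of a triangle with two finite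
vertices `v, u` (radii `r_v, r_u`, weights `Θ_v` opposite `v`, `Θ_u` opposite
`u`, `Θ_w` on the edge joining `v` and `u`) and one infinitesimal vertex. -/
noncomputable def degAngle (rv ru Θv Θu Θw : ℝ) : ℝ :=
  Real.arccos ((rv * Real.cos Θu - ru * Real.cos Θv) /
    Real.sqrt (rv ^ 2 + ru ^ 2 + 2 * rv * ru * Real.cos Θw))

theorem degAngle_swap (rv ru Θv Θu Θw : ℝ) :
    degAngle ru rv Θu Θv Θw = π - degAngle rv ru Θv Θu Θw := by
  rw [degAngle, degAngle, ← arccos_neg, ← neg_div, neg_sub,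
    show ru ^ 2 + rv ^ 2 + 2 * ru * rv * cos Θw = rv ^ 2 + ru ^ 2 + 2 * rv * ru * cos Θw by ring]

theorem degAngle_mul_mul {t : ℝ} (ht : 0 < t) (rv ru Θv Θu Θw : ℝ) :
    degAngle (t * rv) (t * ru) Θv Θu Θw = degAngle rv ru Θv Θu Θw := by
  rw [degAngle, degAngle,
    show (t * rv) ^ 2 + (t * ru) ^ 2 + 2 * (t * rv) * (t * ru) * cos Θw
      = t ^ 2 * (rv ^ 2 + ru ^ 2 + 2 * rv * ru * cos Θw) by ring,
    sqrt_mul (sq_nonneg t), sqrt_sq ht.le, mul_assoc, mul_assoc, ← mul_sub,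
    mul_div_mul_left _ _ ht.ne']

theorem degAngle_exp_exp (xv xu y Θv Θu Θw : ℝ) :
    degAngle (exp y) (exp xu) Θv Θu Θw = degAngle (exp xv) (exp (xv + xu - y)) Θv Θu Θw := by
  rw [← degAngle_mul_mul (exp_pos (y - xv)) (exp xv), ← exp_add, ← exp_add]
  congr 2 <;> ring

theorem deriv_degAngle_exp_left (xv xu Θv Θu Θw : ℝ) :
    deriv (fun y => degAngle (exp y) (exp xu) Θv Θu Θw) xv =
      -deriv (fun y => degAngle (exp xv) (exp y) Θv Θu Θw) xu := by
  simp_rw [degAngle_exp_exp xv xu]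
  rw [deriv_comp_const_sub (f := fun y => degAngle (exp xv) (exp y) Θv Θu Θw),
    add_sub_cancel_left]

theorem HasDerivAt.arccos_div_sqrt {N Q : ℝ → ℝ} {N' Q' x : ℝ} (hN : HasDerivAt N N' x)
    (hQ : HasDerivAt Q Q' x) (hNQ : N x ^ 2 < Q x) :
    HasDerivAt (fun t => arccos (N t / √(Q t)))
      ((N x * Q' / 2 - N' * Q x) / (Q x * √(Q x - N x ^ 2))) x := by
  have hQpos : 0 < Q x := (sq_nonneg _).trans_lt hNQ
  have hs : 0 < √(Q x) := sqrt_pos.2 hQpos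
  have hss : √(Q x) ^ 2 = Q x := sq_sqrt hQpos.le
  have hlt : |N x / √(Q x)| < 1 := by
    rw [← sq_lt_one_iff_abs_lt_one, div_pow, hss, div_lt_one hQpos]
    exact hNQ
  have hcos : √(1 - (N x / √(Q x)) ^ 2) = √(Q x - N x ^ 2) / √(Q x) := by
    rw [← sqrt_div (sub_pos.2 hNQ).le, sub_div, div_self hQpos.ne', div_pow, hss]
  have harccos := hasDerivAt_arccos (abs_lt.1 hlt).1.ne' (abs_lt.1 hlt).2.ne
  refine (harccos.comp x (hN.div (hQ.sqrt hQpos.ne') hs.ne')).congr_deriv ?_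
  rw [hcos]
  field_simp
  rw [hss]
  ring

theorem sq_mul_sub_mul_lt {a b c rv ru : ℝ} (ha : 0 ≤ a) (ha1 : a ≤ 1) (hb : 0 ≤ b)
    (hb1 : b ≤ 1) (hc : 0 ≤ c) (hrv : 0 < rv) (hru : 0 < ru) :
    (rv * a - ru * b) ^ 2 < rv ^ 2 + ru ^ 2 + 2 * rv * ru * c := by
  have habs : |rv * a - ru * b| ≤ max rv ru := by
    rw [abs_le]
    constructor <;> nlinarith [le_max_left rv ru, le_max_right rv ru]
  have hmax : max rv ru ^ 2 < rv ^ 2 + ru ^ 2 := by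
    rcases max_choice rv ru with h | h <;> rw [h] <;> nlinarith
  calc (rv * a - ru * b) ^ 2 = |rv * a - ru * b| ^ 2 := (sq_abs _).symm
    _ ≤ max rv ru ^ 2 := pow_le_pow_left₀ (abs_nonneg _) habs 2
    _ < rv ^ 2 + ru ^ 2 := hmax
    _ ≤ rv ^ 2 + ru ^ 2 + 2 * rv * ru * c := by
      have := mul_nonneg (mul_nonneg hrv.le hru.le) hc
      linarith

theorem exists_pos_hasDerivAt_degAngle_exp_right {xv xu Θv Θu Θw : ℝ} (hb : 0 ≤ cos Θv)
    (ha : 0 ≤ cos Θu) (hc : 0 ≤ cos Θw) :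
    ∃ κ > 0, HasDerivAt (fun y => degAngle (exp xv) (exp y) Θv Θu Θw)
      (κ * (exp xv * (cos Θv + cos Θu * cos Θw) + exp xu * (cos Θu + cos Θv * cos Θw))) xu := by
  set a := cos Θu
  set b := cos Θv
  set c := cos Θw
  set rv := exp xv
  set ru := exp xu
  have hN : HasDerivAt (fun r => rv * a - r * b) (-b) ru := by
    simpa using ((hasDerivAt_id ru).mul_const b).const_sub (rv * a)
  have hQ : HasDerivAt (fun r => rv ^ 2 + r ^ 2 + 2 * rv * r * c) (2 * ru + 2 * rv * c) ru := by
    simpa [mul_comm] using ((hasDerivAt_pow 2 ru).const_add (rv ^ 2)).fun_add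
      (((hasDerivAt_id ru).const_mul (2 * rv)).mul_const c)
  have hNQ :=
    sq_mul_sub_mul_lt ha (cos_le_one _) hb (cos_le_one _) hc (exp_pos xv) (exp_pos xu)
  have hθ := (hN.arccos_div_sqrt hQ hNQ).comp xu (hasDerivAt_exp xu)
  refine ⟨rv / ((rv ^ 2 + ru ^ 2 + 2 * rv * ru * c) *
    √(rv ^ 2 + ru ^ 2 + 2 * rv * ru * c - (rv * a - ru * b) ^ 2)) * ru, ?_, hθ.congr_deriv ?_⟩
  · have := sqrt_pos.2 (sub_pos.2 hNQ)
    have := (sq_nonneg _).trans_lt hNQ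
    positivity
  · ring

theorem mul_add_mul_add_mul_eq_zero_iff {a b c rv ru : ℝ} (ha : 0 ≤ a) (hb : 0 ≤ b)
    (hc : 0 ≤ c) (hrv : 0 < rv) (hru : 0 < ru) :
    rv * (b + a * c) + ru * (a + b * c) = 0 ↔ b = 0 ∧ a = 0 := by
  constructor
  · intro h
    constructor <;> nlinarith [mul_nonneg hrv.le (mul_nonneg ha hc),
      mul_nonneg hru.le (mul_nonneg hb hc), mul_nonneg hrv.le hb, mul_nonneg hru.le ha]
  · rintro ⟨rfl, rfl⟩
    simp

theorem cos_eq_zero_iff_of_mem_Icc {θ : ℝ} (hθ : θ ∈ Set.Icc 0 π) : cos θ = 0 ↔ θ = π / 2 := by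
  refine ⟨fun h => injOn_cos hθ ⟨by positivity, by linarith [pi_pos]⟩ ?_,
    fun h => h ▸ cos_pi_div_two⟩
  rw [h, cos_pi_div_two]

/-- In logarithmic coordinates `x_v = log r_v`, the degenerate angle satisfies
`∂θ_v/∂x_u = ∂θ_u/∂x_v = −∂θ_v/∂x_v ≥ 0`, with equality iff
`Θ_v = Θ_u = π/2`. -/
theorem degAngle_log_derivatives
    (xv xu Θv Θu Θw : ℝ)
    (hΘv : Θv ∈ Set.Icc 0 (π / 2)) (hΘu : Θu ∈ Set.Icc 0 (π / 2))
    (hΘw : Θw ∈ Set.Icc 0 (π / 2)) :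
    deriv (fun y => degAngle (Real.exp xv) (Real.exp y) Θv Θu Θw) xu =
        deriv (fun y => degAngle (Real.exp xu) (Real.exp y) Θu Θv Θw) xv ∧
    deriv (fun y => degAngle (Real.exp xv) (Real.exp y) Θv Θu Θw) xu =
        -deriv (fun y => degAngle (Real.exp y) (Real.exp xu) Θv Θu Θw) xv ∧
    (0 ≤ deriv (fun y => degAngle (Real.exp xv) (Real.exp y) Θv Θu Θw) xu) ∧
    (deriv (fun y => degAngle (Real.exp xv) (Real.exp y) Θv Θu Θw) xu = 0 ↔
      Θv = π / 2 ∧ Θu = π / 2) := by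
  have hvu := deriv_degAngle_exp_left xv xu Θv Θu Θw
  have huv : deriv (fun y => degAngle (exp xu) (exp y) Θu Θv Θw) xv =
      deriv (fun y => degAngle (exp xv) (exp y) Θv Θu Θw) xu := by
    simp_rw [degAngle_swap _ (exp xu)]
    rw [deriv_const_sub, hvu, neg_neg]
  have hcos {θ : ℝ} (hθ : θ ∈ Set.Icc 0 (π / 2)) : 0 ≤ cos θ :=
    cos_nonneg_of_mem_Icc ⟨by linarith [hθ.1, pi_pos], hθ.2⟩
  have hIcc : Set.Icc 0 (π / 2) ⊆ Set.Icc 0 π := Set.Icc_subset_Icc_right (half_le_self pi_pos.le)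
  obtain ⟨κ, hκ, hderiv⟩ := exists_pos_hasDerivAt_degAngle_exp_right (xv := xv) (xu := xu)
    (hcos hΘv) (hcos hΘu) (hcos hΘw)
  refine ⟨huv.symm, by rw [hvu, neg_neg], ?_, ?_⟩ <;> rw [hderiv.deriv]
  · exact mul_nonneg hκ.le (add_nonneg
      (mul_nonneg (exp_pos xv).le (add_nonneg (hcos hΘv) (mul_nonneg (hcos hΘu) (hcos hΘw))))
      (mul_nonneg (exp_pos xu).le (add_nonneg (hcos hΘu) (mul_nonneg (hcos hΘv) (hcos hΘw)))))
  · rw [mul_eq_zero, or_iff_right hκ.ne',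
      mul_add_mul_add_mul_eq_zero_iff (hcos hΘu) (hcos hΘv) (hcos hΘw) (exp_pos xv) (exp_pos xu),
      cos_eq_zero_iff_of_mem_Icc (hIcc hΘv), cos_eq_zero_iff_of_mem_Icc (hIcc hΘu)]
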